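/- Suppose A is a super-amenable Banach algebra. Then A**, with the first Arens product, is Connes-amenable: for every normal dual Banach A**-bimodule B, every weak*-to-weak* continuous derivation from A** into B is inner. -/

import Mathlib

namespace NormedSpace

/-- The topological dual of a normed space, as `NormedSpace.Dual` was defined in older Mathlib. -/
abbrev Dual (𝕜 : Type*) [NontriviallyNormedField 𝕜] (E : Type*) [SeminormedAddCommGroup E]
    [NormedSpace 𝕜 E] : Type _ := E →L[𝕜] 𝕜

end NormedSpace

open ContinuousLinearMap NormedSpace

noncomputable section

section Defs

variable {X Y Z W : Type} [NormedAddCommGroup X] [NormedSpace ℝ X]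
  [NormedAddCommGroup Y] [NormedSpace ℝ Y] [NormedAddCommGroup Z] [NormedSpace ℝ Z]
  [NormedAddCommGroup W] [NormedSpace ℝ W]

/-- The first adjoint `m^*` of a bounded bilinear map `m : X × Y → Z`,
as a map `Z^* × X → Y^*`, `⟨m^*(z',x), y⟩ = ⟨z', m(x,y)⟩`. -/
def adj1 (m : X →L[ℝ] Y →L[ℝ] Z) :
    Dual ℝ Z →L[ℝ] X →L[ℝ] Dual ℝ Y :=
  (((ContinuousLinearMap.compL ℝ X (Y →L[ℝ] Z) (Dual ℝ Y)).flip m).comp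
    (ContinuousLinearMap.compL ℝ Y Z ℝ))

@[simp] lemma adj1_apply (m : X →L[ℝ] Y →L[ℝ] Z) (z' : Dual ℝ Z) (x : X) (y : Y) :
    adj1 m z' x y = z' (m x y) := rfl

/-- The first (left) Arens extension `m^{***} : X^{**} × Y^{**} → Z^{**}` of a
bounded bilinear map `m : X × Y → Z`. -/
def arens (m : X →L[ℝ] Y →L[ℝ] Z) :
    Dual ℝ (Dual ℝ X) →L[ℝ] Dual ℝ (Dual ℝ Y) →L[ℝ] Dual ℝ (Dual ℝ Z) :=
  adj1 (adj1 (adj1 m))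

/-- The adjoint (dual map) of a bounded linear map. -/
def dualMap' (D : X →L[ℝ] Y) : Dual ℝ Y →L[ℝ] Dual ℝ X :=
  (ContinuousLinearMap.compL ℝ X Y ℝ).flip D

@[simp] lemma dualMap'_apply (D : X →L[ℝ] Y) (g : Dual ℝ Y) (x : X) :
    dualMap' D g x = g (D x) := rfl

/-- The second adjoint `D'' : X^{**} → Y^{**}` of a bounded linear map. -/
def bidualMap (D : X →L[ℝ] Y) : Dual ℝ (Dual ℝ X) →L[ℝ] Dual ℝ (Dual ℝ Y) :=
  dualMap' (dualMap' D)

/-- Given an action `t : A × X → X`, the transposed action on the dual `X^*`: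
`(dualAct t) a f = f ∘ (t a)`. -/
def dualAct (t : W →L[ℝ] X →L[ℝ] X) : W →L[ℝ] Dual ℝ X →L[ℝ] Dual ℝ X :=
  ((ContinuousLinearMap.compL ℝ X X ℝ).flip).comp t

@[simp] lemma dualAct_apply (t : W →L[ℝ] X →L[ℝ] X) (a : W) (f : Dual ℝ X) (x : X) :
    dualAct t a f x = f (t a x) := rfl

/-- `D : A → X` is a derivation with respect to the multiplication `mul'` on `A`
and the left action `l` and right action `r` (`r a x` means `x · a`) of `A` on `X`. -/
def IsDer {A' : Type} [NormedAddCommGroup A'] [NormedSpace ℝ A']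
    (mul' : A' →L[ℝ] A' →L[ℝ] A') (l r : A' →L[ℝ] X →L[ℝ] X) (D : A' →L[ℝ] X) : Prop :=
  ∀ a b : A', D (mul' a b) = l a (D b) + r b (D a)

/-- `D : A → X` is an inner derivation: `D a = a·x - x·a` for some `x`. -/
def IsInner {A' : Type} [NormedAddCommGroup A'] [NormedSpace ℝ A']
    (l r : A' →L[ℝ] X →L[ℝ] X) (D : A' →L[ℝ] X) : Prop :=
  ∃ x : X, ∀ a : A', D a = l a x - r a x

/-- The bimodule axioms for actions `l`, `r` of an algebra with multiplication `mul'`. -/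
def IsBimod {A' : Type} [NormedAddCommGroup A'] [NormedSpace ℝ A']
    (mul' : A' →L[ℝ] A' →L[ℝ] A') (l r : A' →L[ℝ] X →L[ℝ] X) : Prop :=
  (∀ a b x, l (mul' a b) x = l a (l b x)) ∧
  (∀ a b x, r (mul' a b) x = r b (r a x)) ∧
  (∀ a b x, l a (r b x) = r b (l a x))

/-- weak*-to-weak* continuity of a map between dual spaces. -/
def WStarCont (f : Dual ℝ X → Dual ℝ Y) : Prop :=
  ∀ y : Y, Continuous fun φ : WeakDual ℝ X => f φ y

end Defs

/-- A packaged Banach `A`-bimodule (used to form iterated duals). -/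
structure ModPk (A : Type) [NormedAddCommGroup A] [NormedSpace ℝ A] : Type 1 where
  X : Type
  [grp : NormedAddCommGroup X]
  [mod : NormedSpace ℝ X]
  l : A →L[ℝ] X →L[ℝ] X
  r : A →L[ℝ] X →L[ℝ] X

attribute [instance] ModPk.grp ModPk.mod

variable {A : Type} [NormedAddCommGroup A] [NormedSpace ℝ A]

/-- The canonical dual of a packaged bimodule. -/
def ModPk.dual (P : ModPk A) : ModPk A :=
  ⟨Dual ℝ P.X, dualAct P.r, dualAct P.l⟩

/-- The `n`-th iterated dual of a packaged bimodule. -/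
def ModPk.iter (P : ModPk A) : ℕ → ModPk A
  | 0 => P
  | n+1 => (P.iter n).dual

/-- A "level": an algebra (given by its bilinear multiplication) together with a bimodule. -/
structure Lvl : Type 1 where
  Alg : Type
  [g1 : NormedAddCommGroup Alg]
  [m1 : NormedSpace ℝ Alg]
  Mod : Type
  [g2 : NormedAddCommGroup Mod]
  [m2 : NormedSpace ℝ Mod]
  mul : Alg →L[ℝ] Alg →L[ℝ] Alg
  l : Alg →L[ℝ] Mod →L[ℝ] Mod
  r : Alg →L[ℝ] Mod →L[ℝ] Mod

attribute [instance] Lvl.g1 Lvl.m1 Lvl.g2 Lvl.m2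

/-- Passing to second duals: `A^{**}` with the first Arens product, acting on `B^{**}`
via the Arens extensions `π_ℓ^{***}` and `π_r^{***}` of the module actions. -/
def Lvl.double (Q : Lvl) : Lvl where
  Alg := Dual ℝ (Dual ℝ Q.Alg)
  Mod := Dual ℝ (Dual ℝ Q.Mod)
  mul := arens Q.mul
  l := arens Q.l
  r := (arens Q.r.flip).flip

/-- Iterated even duals: `Lvl.iter Q n` is the level `(A^{(2n)}, B^{(2n)})`. -/
def Lvl.iter (Q : Lvl) : ℕ → Lvl
  | 0 => Q
  | n+1 => (Q.iter n).double

/-- The canonical embedding `A → A^{(2n)}`. -/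
def Lvl.embA (Q : Lvl) : (n : ℕ) → Q.Alg →L[ℝ] (Q.iter n).Alg
  | 0 => ContinuousLinearMap.id ℝ _
  | n+1 => (inclusionInDoubleDual ℝ ((Q.iter n).Alg)).comp (Q.embA n)

/-- The canonical embedding `B → B^{(2n)}`. -/
def Lvl.embM (Q : Lvl) : (n : ℕ) → Q.Mod →L[ℝ] (Q.iter n).Mod
  | 0 => ContinuousLinearMap.id ℝ _
  | n+1 => (inclusionInDoubleDual ℝ ((Q.iter n).Mod)).comp (Q.embM n)

/-- The left-topological-center condition `Z^ℓ_{A^{(2n+2)}}(B^{(2n+2)}) = B^{(2n+2)}`,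
stated at the double of a level `Q`: for each `b` in the second-dual module, the map
`a ↦ b·a` is weak*-to-weak* continuous. -/
def Lvl.doubleZl (Q : Lvl) : Prop :=
  ∀ b : (Q.double).Mod, WStarCont (X := Dual ℝ Q.Alg) (Y := Dual ℝ Q.Mod)
    (fun a => (Q.double).r a b)

/-- The base level of a Banach algebra `A` with a Banach `A`-bimodule `B`. -/
def lvlOf (A : Type) [NormedRing A] [NormedAlgebra ℝ A]
    (B : Type) [NormedAddCommGroup B] [NormedSpace ℝ B]
    (l r : A →L[ℝ] B →L[ℝ] B) : Lvl :=
  Lvl.mk A B (ContinuousLinearMap.mul ℝ A) l r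
/-- A Banach algebra `A` is super-amenable: every continuous derivation into every
Banach `A`-bimodule is inner. -/
def SuperAmenable (A : Type) [NormedRing A] [NormedAlgebra ℝ A] : Prop :=
  ∀ (X : Type) [NormedAddCommGroup X] [NormedSpace ℝ X] [CompleteSpace X],
  ∀ (l r : A →L[ℝ] X →L[ℝ] X), IsBimod (ContinuousLinearMap.mul ℝ A) l r →
  ∀ D : A →L[ℝ] X, IsDer (ContinuousLinearMap.mul ℝ A) l r D → IsInner l r D

/-!
Restricting a derivation `D : A** → E*` along the canonical embedding `A → A**` gives a bounded
derivation of `A` into the Banach `A`-bimodule `E*`, which super-amenability makes inner, say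
`D a = a·x - x·a`. Both sides of this identity are weak*-continuous in `a ∈ A**` (by the
continuity of `D` and the normality of `E*`), and `A` is weak*-dense in `A**` by Hahn–Banach,
since a weak*-continuous functional on `A**` is evaluation at a point of `A*`. So the identity
persists on all of `A**`.
-/

section Density

variable {E : Type*} [AddCommGroup E] [Module ℝ E]

theorem Submodule.map_eq_zero_of_forall_lt (M : Submodule ℝ E) (f : E →ₗ[ℝ] ℝ) {u : ℝ}
    (hf : ∀ m ∈ M, f m < u) {m : E} (hm : m ∈ M) : f m = 0 := by
  by_contra hne
  have h := hf (((|u| + 1) / f m) • m) (M.smul_mem _ hm)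
  rw [map_smul, smul_eq_mul, div_mul_cancel₀ _ hne] at h
  linarith [le_abs_self u]

variable [TopologicalSpace E] [IsTopologicalAddGroup E] [ContinuousSMul ℝ E]
  [LocallyConvexSpace ℝ E]

theorem Submodule.dense_of_forall_strongDual_eq_zero (M : Submodule ℝ E)
    (h : ∀ f : StrongDual ℝ E, (∀ m ∈ M, f m = 0) → f = 0) : Dense (M : Set E) := by
  rw [Submodule.dense_iff_topologicalClosure_eq_top, eq_top_iff']
  intro x
  by_contra hx
  obtain ⟨f, u, hfu, hux⟩ := geometric_hahn_banach_closed_point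
    M.topologicalClosure.convex M.isClosed_topologicalClosure hx
  have hf : f = 0 := h f fun m hm =>
    M.topologicalClosure.map_eq_zero_of_forall_lt f.toLinearMap hfu (M.le_topologicalClosure hm)
  have hu : 0 < u := by simpa using hfu 0 M.topologicalClosure.zero_mem
  simp only [hf, zero_apply] at hux
  linarith

end Density

theorem denseRange_inclusionInDoubleDualWeak (X : Type*) [NormedAddCommGroup X]
    [NormedSpace ℝ X] : DenseRange (inclusionInDoubleDualWeak ℝ X) := by
  have : LocallyConvexSpace ℝ (WeakDual ℝ (Dual ℝ X)) := WeakBilin.locallyConvexSpace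
  refine Submodule.dense_of_forall_strongDual_eq_zero
    (LinearMap.range (inclusionInDoubleDualWeak ℝ X).toLinearMap) fun f hf => ?_
  obtain ⟨φ, rfl⟩ := (topDualPairing ℝ (Dual ℝ X)).dualEmbedding_surjective f
  have hφ : φ = 0 := ext fun x => hf _ ⟨x, rfl⟩
  ext F
  show topDualPairing ℝ (Dual ℝ X) F φ = 0
  rw [hφ, map_zero]

theorem WStarCont.eq_of_comp_inclusionInDoubleDual {X Y : Type} [NormedAddCommGroup X]
    [NormedSpace ℝ X] [NormedAddCommGroup Y] [NormedSpace ℝ Y]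
    {f g : Dual ℝ (Dual ℝ X) → Dual ℝ Y} (hf : WStarCont f) (hg : WStarCont g)
    (h : ∀ x, f (inclusionInDoubleDual ℝ X x) = g (inclusionInDoubleDual ℝ X x)) : f = g := by
  funext F
  ext y
  exact congrFun ((denseRange_inclusionInDoubleDualWeak X).equalizer (hf y) (hg y)
    (funext fun x => congrArg (· y) (h x))) F

theorem arens_inclusionInDoubleDual {X Y Z : Type} [NormedAddCommGroup X] [NormedSpace ℝ X]
    [NormedAddCommGroup Y] [NormedSpace ℝ Y] [NormedAddCommGroup Z] [NormedSpace ℝ Z]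
    (m : X →L[ℝ] Y →L[ℝ] Z) (x : X) (y : Y) :
    arens m (inclusionInDoubleDual ℝ X x) (inclusionInDoubleDual ℝ Y y)
      = inclusionInDoubleDual ℝ Z (m x y) :=
  rfl

section Restriction

variable {A B X : Type} [NormedAddCommGroup A] [NormedSpace ℝ A] [NormedAddCommGroup B]
  [NormedSpace ℝ B] [NormedAddCommGroup X] [NormedSpace ℝ X]
  {mulA : A →L[ℝ] A →L[ℝ] A} {mulB : B →L[ℝ] B →L[ℝ] B} (ι : A →L[ℝ] B)
  (hι : ∀ a b, mulB (ι a) (ι b) = ι (mulA a b)) {l r : B →L[ℝ] X →L[ℝ] X}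
include hι

theorem IsBimod.comp (h : IsBimod mulB l r) : IsBimod mulA (l.comp ι) (r.comp ι) := by
  refine ⟨fun a b x => ?_, fun a b x => ?_, fun a b x => h.2.2 (ι a) (ι b) x⟩
  · simpa only [comp_apply, hι] using h.1 (ι a) (ι b) x
  · simpa only [comp_apply, hι] using h.2.1 (ι a) (ι b) x

theorem IsDer.comp {D : B →L[ℝ] X} (h : IsDer mulB l r D) :
    IsDer mulA (l.comp ι) (r.comp ι) (D.comp ι) := fun a b => by
  simpa only [comp_apply, hι] using h (ι a) (ι b)

end Restriction

theorem stmt15_general (A : Type) [NormedRing A] [NormedAlgebra ℝ A]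
    (hsa : SuperAmenable A) :
    ∀ (E : Type) [NormedAddCommGroup E] [NormedSpace ℝ E] [CompleteSpace E],
    ∀ (l r : Dual ℝ (Dual ℝ A) →L[ℝ] Dual ℝ E →L[ℝ] Dual ℝ E),
      IsBimod (A' := Dual ℝ (Dual ℝ A)) (X := Dual ℝ E) (arens (ContinuousLinearMap.mul ℝ A)) l r →
      -- the dual bimodule `E* ` is normal
      (∀ b : Dual ℝ E,
        (∀ e : E, Continuous fun F : WeakDual ℝ (Dual ℝ A) => l F b e) ∧
        (∀ e : E, Continuous fun F : WeakDual ℝ (Dual ℝ A) => r F b e)) →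
      ∀ D : Dual ℝ (Dual ℝ A) →L[ℝ] Dual ℝ E,
        IsDer (A' := Dual ℝ (Dual ℝ A)) (X := Dual ℝ E) (arens (ContinuousLinearMap.mul ℝ A)) l r D →
        -- `D` is weak*-to-weak* continuous
        (∀ e : E, Continuous fun F : WeakDual ℝ (Dual ℝ A) => D F e) →
        IsInner (A' := Dual ℝ (Dual ℝ A)) (X := Dual ℝ E) l r D := by
  intro E _ _ _ l r hbimod hnormal D hder hD
  have hι := arens_inclusionInDoubleDual (ContinuousLinearMap.mul ℝ A)
  obtain ⟨x, hx⟩ := hsa (Dual ℝ E) _ _ (hbimod.comp _ hι) _ (hder.comp _ hι)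
  have hinner : WStarCont fun F => l F x - r F x := fun e =>
    ((hnormal x).1 e).sub ((hnormal x).2 e)
  exact ⟨x, congrFun (WStarCont.eq_of_comp_inclusionInDoubleDual hD hinner hx)⟩

/-- **Theorem 2-22 (1).** If `A` is super-amenable then `A**` (with the first Arens
product) is Connes-amenable: for every normal dual Banach `A**`-bimodule, every
weak*-to-weak* continuous derivation is inner. -/
theorem stmt15 (A : Type) [NormedRing A] [NormedAlgebra ℝ A] [CompleteSpace A]
    (hsa : SuperAmenable A) :
    ∀ (E : Type) [NormedAddCommGroup E] [NormedSpace ℝ E] [CompleteSpace E],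
    ∀ (l r : Dual ℝ (Dual ℝ A) →L[ℝ] Dual ℝ E →L[ℝ] Dual ℝ E),
      IsBimod (A' := Dual ℝ (Dual ℝ A)) (X := Dual ℝ E) (arens (ContinuousLinearMap.mul ℝ A)) l r →
      -- the dual bimodule `E* ` is normal
      (∀ b : Dual ℝ E,
        (∀ e : E, Continuous fun F : WeakDual ℝ (Dual ℝ A) => l F b e) ∧
        (∀ e : E, Continuous fun F : WeakDual ℝ (Dual ℝ A) => r F b e)) →
      ∀ D : Dual ℝ (Dual ℝ A) →L[ℝ] Dual ℝ E,
        IsDer (A' := Dual ℝ (Dual ℝ A)) (X := Dual ℝ E) (arens (ContinuousLinearMap.mul ℝ A)) l r D →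
        -- `D` is weak*-to-weak* continuous
        (∀ e : E, Continuous fun F : WeakDual ℝ (Dual ℝ A) => D F e) →
        IsInner (A' := Dual ℝ (Dual ℝ A)) (X := Dual ℝ E) l r D :=
  stmt15_general A hsa
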